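/- Two non-abelian 2-cocycles (▶, ◀, χ) and (▶̄, ◀̄, χ̄) on B with values in A are equivalent if and only if the corresponding extensions 0 → A → A ⊕_{(▶,◀,χ)} B → B → 0 and 0 → A → A ⊕_{(▶̄,◀̄,χ̄)} B → B → 0 are equivalent extensions; moreover when δ: B → A witnesses the cocycle equivalence, θ(a,b) = (a − δ(b), b) is the corresponding isomorphism of associative conformal algebras. -/

import Mathlib

/-!
An equivalence of extensions fixes `A` and covers the identity of `B`, so it is a shear
`θ(a, b) = (a - δ b, b)` for a unique linear `δ : B → A`. Comparing `θ (p · q)` with `θ p ·' θ q`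
on the pairs `(b, a)`, `(a, b)` and `(b₁, b₂)` gives exactly the three coboundary conditions
relating `(▶, ◀, χ)` and `(▶', ◀', χ')`, and compatibility with `∂` gives `δ ∂ = ∂ δ`; conversely,
by bilinearity these conditions make the shear multiplicative.
-/

structure AssocConformalAlg (k : Type*) [Field k] (A : Type*) [AddCommGroup A] [Module k A] where
  D : A →ₗ[k] A
  mul : k → A →ₗ[k] A →ₗ[k] A
  conf_left : ∀ (l : k) (a b : A), mul l (D a) b = -(l • mul l a b)
  conf_right : ∀ (l : k) (a b : A), mul l a (D b) = D (mul l a b) + l • mul l a b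
  assoc : ∀ (l m : k) (a b c : A), mul (l + m) (mul l a b) c = mul l a (mul m b c)

structure IsNonAbel2Cocycle {k : Type*} [Field k] {A B : Type*}
    [AddCommGroup A] [Module k A] [AddCommGroup B] [Module k B]
    (SA : AssocConformalAlg k A) (SB : AssocConformalAlg k B)
    (lact : k → B →ₗ[k] A →ₗ[k] A) (ract : k → A →ₗ[k] B →ₗ[k] A)
    (chi : k → B →ₗ[k] B →ₗ[k] A) : Prop where
  lact_DB : ∀ l b a, lact l (SB.D b) a = -(l • lact l b a)
  lact_DA : ∀ l b a, lact l b (SA.D a) = SA.D (lact l b a) + l • lact l b a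
  ract_DA : ∀ l a b, ract l (SA.D a) b = -(l • ract l a b)
  ract_DB : ∀ l a b, ract l a (SB.D b) = SA.D (ract l a b) + l • ract l a b
  chi_DB1 : ∀ l b1 b2, chi l (SB.D b1) b2 = -(l • chi l b1 b2)
  chi_DB2 : ∀ l b1 b2, chi l b1 (SB.D b2) = SA.D (chi l b1 b2) + l • chi l b1 b2
  coh1 : ∀ l m b1 b2 a, lact l b1 (lact m b2 a)
      = lact (l + m) (SB.mul l b1 b2) a + SA.mul (l + m) (chi l b1 b2) a
  coh2 : ∀ l m a b1 b2, ract (l + m) (ract l a b1) b2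
      = ract l a (SB.mul m b1 b2) + SA.mul l a (chi m b1 b2)
  coh3 : ∀ l m b1 a b2, lact l b1 (ract m a b2) = ract (l + m) (lact l b1 a) b2
  coh4 : ∀ l m a1 a2 b, ract (l + m) (SA.mul l a1 a2) b = SA.mul l a1 (ract m a2 b)
  coh4' : ∀ l m b a1 a2, lact l b (SA.mul m a1 a2) = SA.mul (l + m) (lact l b a1) a2
  coh4'' : ∀ l m a1 b a2, SA.mul (l + m) (ract l a1 b) a2 = SA.mul l a1 (lact m b a2)
  coh5 : ∀ l m b1 b2 b3, lact l b1 (chi m b2 b3) + chi (l + m) b1 (SB.mul m b2 b3)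
      = chi (l + m) (SB.mul l b1 b2) b3 + ract (l + m) (chi l b1 b2) b3

def CocycleEquivVia {k : Type*} [Field k] {A B : Type*}
    [AddCommGroup A] [Module k A] [AddCommGroup B] [Module k B]
    (SA : AssocConformalAlg k A) (SB : AssocConformalAlg k B)
    (lact : k → B → A → A) (ract : k → A → B → A) (chi : k → B → B → A)
    (lact' : k → B → A → A) (ract' : k → A → B → A) (chi' : k → B → B → A)
    (δ : B →ₗ[k] A) : Prop :=
  (∀ b, δ (SB.D b) = SA.D (δ b)) ∧
  (∀ l b a, lact' l b a - lact l b a = SA.mul l (δ b) a) ∧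
  (∀ l a b, ract' l a b - ract l a b = SA.mul l a (δ b)) ∧
  (∀ l b1 b2, chi' l b1 b2 - chi l b1 b2
    = lact' l b1 (δ b2) - δ (SB.mul l b1 b2) + ract' l (δ b1) b2 - SA.mul l (δ b1) (δ b2))

namespace AssocConformalAlg

variable {k A B : Type*} [Field k] [AddCommGroup A] [Module k A] [AddCommGroup B] [Module k B]

/-- The product of `A ⊕_{(▶,◀,χ)} B`. -/
def extMul (SA : AssocConformalAlg k A) (SB : AssocConformalAlg k B)
    (lact : k → B →ₗ[k] A →ₗ[k] A) (ract : k → A →ₗ[k] B →ₗ[k] A)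
    (chi : k → B →ₗ[k] B →ₗ[k] A) (l : k) (p q : A × B) : A × B :=
  (SA.mul l p.1 q.1 + lact l p.2 q.1 + ract l p.1 q.2 + chi l p.2 q.2, SB.mul l p.2 q.2)

def shear (δ : B →ₗ[k] A) : A × B →ₗ[k] A × B :=
  (LinearMap.fst k A B - δ ∘ₗ LinearMap.snd k A B).prod (LinearMap.snd k A B)

@[simp]
theorem shear_apply (δ : B →ₗ[k] A) (p : A × B) : shear δ p = (p.1 - δ p.2, p.2) := rfl

theorem eq_shear_of_fixes_inl_of_snd_eq (θ : A × B →ₗ[k] A × B)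
    (hinl : ∀ a : A, θ (a, 0) = (a, 0)) (hsnd : ∀ p : A × B, (θ p).2 = p.2) :
    θ = shear (-(LinearMap.fst k A B ∘ₗ θ ∘ₗ LinearMap.inr k A B)) := by
  refine LinearMap.ext fun ⟨a, b⟩ => ?_
  have hsplit : θ (a, b) = θ (a, 0) + θ (0, b) := by
    rw [← map_add, Prod.mk_add_mk, add_zero, zero_add]
  rw [hsplit, hinl]
  refine Prod.ext ?_ ?_
  · simp [sub_eq_add_neg]
  · simp [hsnd]

variable (SA : AssocConformalAlg k A) (SB : AssocConformalAlg k B)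
  (lact : k → B →ₗ[k] A →ₗ[k] A) (ract : k → A →ₗ[k] B →ₗ[k] A) (chi : k → B →ₗ[k] B →ₗ[k] A)
  (lact' : k → B →ₗ[k] A →ₗ[k] A) (ract' : k → A →ₗ[k] B →ₗ[k] A)
  (chi' : k → B →ₗ[k] B →ₗ[k] A) (δ : B →ₗ[k] A)

theorem shear_prodMap_iff :
    (∀ p, shear δ (Prod.map SA.D SB.D p) = Prod.map SA.D SB.D (shear δ p)) ↔
      ∀ b, δ (SB.D b) = SA.D (δ b) := by
  refine ⟨fun h b => ?_, fun h p => ?_⟩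
  · simpa using congrArg Prod.fst (h (0, b))
  · simp [h]

theorem shear_extMul_iff :
    (∀ l p q, shear δ (extMul SA SB lact ract chi l p q)
        = extMul SA SB lact' ract' chi' l (shear δ p) (shear δ q)) ↔
      (∀ l b a, lact' l b a - lact l b a = SA.mul l (δ b) a) ∧
      (∀ l a b, ract' l a b - ract l a b = SA.mul l a (δ b)) ∧
      (∀ l b1 b2, chi' l b1 b2 - chi l b1 b2
        = lact' l b1 (δ b2) - δ (SB.mul l b1 b2) + ract' l (δ b1) b2
          - SA.mul l (δ b1) (δ b2)) := by
  constructor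
  · intro h
    refine ⟨fun l b a => ?_, fun l a b => ?_, fun l b1 b2 => ?_⟩
    · have := congrArg Prod.fst (h l (0, b) (a, 0))
      simp only [extMul, shear_apply, map_zero, map_neg, LinearMap.zero_apply,
        LinearMap.neg_apply, add_zero, zero_add, zero_sub, sub_zero] at this
      rw [this]; abel
    · have := congrArg Prod.fst (h l (a, 0) (0, b))
      simp only [extMul, shear_apply, map_zero, map_neg, LinearMap.zero_apply,
        add_zero, zero_add, zero_sub, sub_zero] at this
      rw [this]; abel
    · have := congrArg Prod.fst (h l (0, b1) (0, b2))
      simp only [extMul, shear_apply, map_zero, map_neg, LinearMap.zero_apply,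
        LinearMap.neg_apply, add_zero, zero_add, zero_sub, neg_neg] at this
      rw [eq_add_of_sub_eq this]; abel
  · rintro ⟨hl, hr, hchi⟩ l p q
    have hl' : ∀ l b a, lact' l b a = lact l b a + SA.mul l (δ b) a :=
      fun l b a => eq_add_of_sub_eq' (hl l b a)
    have hr' : ∀ l a b, ract' l a b = ract l a b + SA.mul l a (δ b) :=
      fun l a b => eq_add_of_sub_eq' (hr l a b)
    have hchi' : ∀ l b1 b2, chi' l b1 b2 = chi l b1 b2 + (lact' l b1 (δ b2)
        - δ (SB.mul l b1 b2) + ract' l (δ b1) b2 - SA.mul l (δ b1) (δ b2)) :=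
      fun l b1 b2 => eq_add_of_sub_eq' (hchi l b1 b2)
    refine Prod.ext ?_ rfl
    simp only [extMul, shear_apply, map_sub, LinearMap.sub_apply, hchi', hl', hr']
    abel

theorem cocycleEquivVia_iff_shear :
    CocycleEquivVia SA SB (fun l b a => lact l b a) (fun l a b => ract l a b)
        (fun l b1 b2 => chi l b1 b2) (fun l b a => lact' l b a)
        (fun l a b => ract' l a b) (fun l b1 b2 => chi' l b1 b2) δ ↔
      (∀ p, shear δ (Prod.map SA.D SB.D p) = Prod.map SA.D SB.D (shear δ p)) ∧
      ∀ l p q, shear δ (extMul SA SB lact ract chi l p q)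
        = extMul SA SB lact' ract' chi' l (shear δ p) (shear δ q) := by
  rw [shear_prodMap_iff, shear_extMul_iff]
  rfl

end AssocConformalAlg

open AssocConformalAlg in
theorem stmt_11 (k : Type*) [Field k]
    (A B : Type*) [AddCommGroup A] [Module k A] [AddCommGroup B] [Module k B]
    (SA : AssocConformalAlg k A) (SB : AssocConformalAlg k B)
    (lact : k → B →ₗ[k] A →ₗ[k] A) (ract : k → A →ₗ[k] B →ₗ[k] A)
    (chi : k → B →ₗ[k] B →ₗ[k] A)
    (lact' : k → B →ₗ[k] A →ₗ[k] A) (ract' : k → A →ₗ[k] B →ₗ[k] A)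
    (chi' : k → B →ₗ[k] B →ₗ[k] A)
    (S S' : AssocConformalAlg k (A × B))
    (hSD : ∀ p : A × B, S.D p = (SA.D p.1, SB.D p.2))
    (hSm : ∀ (l : k) (p q : A × B),
      S.mul l p q = (SA.mul l p.1 q.1 + lact l p.2 q.1 + ract l p.1 q.2 + chi l p.2 q.2,
        SB.mul l p.2 q.2))
    (hS'D : ∀ p : A × B, S'.D p = (SA.D p.1, SB.D p.2))
    (hS'm : ∀ (l : k) (p q : A × B),
      S'.mul l p q = (SA.mul l p.1 q.1 + lact' l p.2 q.1 + ract' l p.1 q.2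
          + chi' l p.2 q.2, SB.mul l p.2 q.2)) :
    ((∃ δ : B →ₗ[k] A,
        CocycleEquivVia SA SB (fun l b a => lact l b a) (fun l a b => ract l a b)
          (fun l b1 b2 => chi l b1 b2) (fun l b a => lact' l b a)
          (fun l a b => ract' l a b) (fun l b1 b2 => chi' l b1 b2) δ) ↔
      (∃ θ : (A × B) →ₗ[k] (A × B),
        (∀ p, θ (S.D p) = S'.D (θ p)) ∧
        (∀ l p q, θ (S.mul l p q) = S'.mul l (θ p) (θ q)) ∧
        (∀ a : A, θ (a, (0 : B)) = (a, (0 : B))) ∧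
        (∀ p : A × B, (θ p).2 = p.2))) ∧
    (∀ δ : B →ₗ[k] A,
      CocycleEquivVia SA SB (fun l b a => lact l b a) (fun l a b => ract l a b)
        (fun l b1 b2 => chi l b1 b2) (fun l b a => lact' l b a)
        (fun l a b => ract' l a b) (fun l b1 b2 => chi' l b1 b2) δ →
      ∀ (l : k) (p q : A × B),
        ((S.mul l p q).1 - δ (S.mul l p q).2, (S.mul l p q).2)
          = S'.mul l (p.1 - δ p.2, p.2) (q.1 - δ q.2, q.2)) := by
  have hD : ∀ p, S.D p = Prod.map SA.D SB.D p := hSD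
  have hD' : ∀ p, S'.D p = Prod.map SA.D SB.D p := hS'D
  have hm : ∀ l p q, S.mul l p q = extMul SA SB lact ract chi l p q := hSm
  have hm' : ∀ l p q, S'.mul l p q = extMul SA SB lact' ract' chi' l p q := hS'm
  have hshear : ∀ δ, CocycleEquivVia SA SB (fun l b a => lact l b a) (fun l a b => ract l a b)
        (fun l b1 b2 => chi l b1 b2) (fun l b a => lact' l b a)
        (fun l a b => ract' l a b) (fun l b1 b2 => chi' l b1 b2) δ ↔
      (∀ p, shear δ (S.D p) = S'.D (shear δ p)) ∧
      ∀ l p q, shear δ (S.mul l p q) = S'.mul l (shear δ p) (shear δ q) := by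
    simpa only [hD, hD', hm, hm'] using cocycleEquivVia_iff_shear SA SB lact ract chi lact' ract' chi'
  refine ⟨⟨fun ⟨δ, hδ⟩ => ⟨shear δ, ((hshear δ).mp hδ).1, ((hshear δ).mp hδ).2,
      fun a => by simp, fun p => rfl⟩, fun ⟨θ, hθD, hθm, hinl, hsnd⟩ => ?_⟩,
    fun δ hδ => ((hshear δ).mp hδ).2⟩
  obtain ⟨δ, rfl⟩ : ∃ δ, θ = shear δ := ⟨_, eq_shear_of_fixes_inl_of_snd_eq θ hinl hsnd⟩
  exact ⟨δ, (hshear δ).mpr ⟨hθD, hθm⟩⟩
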